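/- arXiv:2603.04010 — 2 statements merged into one kernel-verified Lean document; each statement's English description precedes it below -/
import Mathlib

section
/- In a level semilattice, the strict relation is compatible with joins: if l < m and l' < m' then l ⊔ l' < m ⊔ m'. -/
theorem stmt_7 {L : Type*} [SemilatticeSup L] (suc : L → L)
    (h1 : ∀ l : L, l ⊔ suc l = suc l)
    (h2 : ∀ l l' : L, suc (l ⊔ l') = suc l ⊔ suc l') :
    ∀ l m l' m' : L, suc l ⊔ m = m → suc l' ⊔ m' = m' →
      suc (l ⊔ l') ⊔ (m ⊔ m') = m ⊔ m' := by
  intro l m l' m' hlm hl'm'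
  rw [h2]
  calc suc l ⊔ suc l' ⊔ (m ⊔ m') = (suc l ⊔ m) ⊔ (suc l' ⊔ m') := by ac_rfl
    _ = m ⊔ m' := by rw [hlm, hl'm']
end

section
/- In the free level semilattice, every element built from generators α₁, …, αₙ using ⊔ and suc is equal (modulo the level-semilattice equations: associativity, commutativity, idempotence of ⊔, l ⊔ suc l = suc l, suc(l ⊔ l') = suc l ⊔ suc l') to a join of terms of the form suc^{p_i}(α_{j_i}) with pairwise distinct generators α_{j_1}, …, α_{j_m}. -/
/-- Level terms over `n` generators. -/
inductive LTerm (n : ℕ) : Type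
  | var : Fin n → LTerm n
  | sup : LTerm n → LTerm n → LTerm n
  | suc : LTerm n → LTerm n

/-- The congruence generated by the level-semilattice equations. -/
inductive LEq {n : ℕ} : LTerm n → LTerm n → Prop
  | refl (t) : LEq t t
  | symm {t u} : LEq t u → LEq u t
  | trans {t u v} : LEq t u → LEq u v → LEq t v
  | supCongr {t t' u u'} : LEq t t' → LEq u u' → LEq (LTerm.sup t u) (LTerm.sup t' u')
  | sucCongr {t t'} : LEq t t' → LEq (LTerm.suc t) (LTerm.suc t')
  | supAssoc (t u v) : LEq (LTerm.sup (LTerm.sup t u) v) (LTerm.sup t (LTerm.sup u v))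
  | supComm (t u) : LEq (LTerm.sup t u) (LTerm.sup u t)
  | supIdem (t) : LEq (LTerm.sup t t) t
  | supSuc (t) : LEq (LTerm.sup t (LTerm.suc t)) (LTerm.suc t)
  | sucSup (t u) : LEq (LTerm.suc (LTerm.sup t u)) (LTerm.sup (LTerm.suc t) (LTerm.suc u))

/-- The atom `suc^p (α_j)`. -/
def atom {n : ℕ} (pj : ℕ × Fin n) : LTerm n :=
  LTerm.suc^[pj.1] (LTerm.var pj.2)

/-- Join of a nonempty list of atoms. -/
def joinAtoms {n : ℕ} (hd : ℕ × Fin n) (tl : List (ℕ × Fin n)) : LTerm n :=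
  tl.foldl (fun a pj => LTerm.sup a (atom pj)) (atom hd)

/-!
In the quotient of level terms by `LEq` the join is commutative, associative and idempotent, so
the quotient is a join-semilattice in which `suc` is an inflationary join-homomorphism. Pushing
`suc` down to the variables shows that every term is the join of the atoms `suc^p α_j` it
contains. Since `suc^p α_j ≤ suc^q α_j` for `p ≤ q`, this join is unchanged when, for each
variable, only the atom with the largest exponent is kept.
-/

namespace LTerm

variable {n : ℕ}

instance setoid : Setoid (LTerm n) := ⟨LEq, ⟨LEq.refl, LEq.symm, LEq.trans⟩⟩

def atoms : LTerm n → Finset (ℕ × Fin n)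
  | var j => {(0, j)}
  | sup t u => t.atoms ∪ u.atoms
  | suc t => t.atoms.image (Prod.map Nat.succ id)

theorem atoms_nonempty : ∀ t : LTerm n, t.atoms.Nonempty
  | var _ => Finset.singleton_nonempty _
  | sup t _ => t.atoms_nonempty.mono Finset.subset_union_left
  | suc t => t.atoms_nonempty.image _

end LTerm

section TopExponent

variable {n : ℕ}

-- `0` if `j` does not occur in `S`
def topExp (S : Finset (ℕ × Fin n)) (j : Fin n) : ℕ :=
  (S.filter (·.2 = j)).sup Prod.fst

theorem le_topExp {S : Finset (ℕ × Fin n)} {x : ℕ × Fin n} (hx : x ∈ S) : x.1 ≤ topExp S x.2 :=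
  Finset.le_sup (f := Prod.fst) (Finset.mem_filter.mpr ⟨hx, rfl⟩)

theorem topExp_mem {S : Finset (ℕ × Fin n)} {j : Fin n} (hj : j ∈ S.image Prod.snd) :
    (topExp S j, j) ∈ S := by
  obtain ⟨x, hxS, rfl⟩ := Finset.mem_image.mp hj
  obtain ⟨y, hy, hyx⟩ :=
    Finset.exists_mem_eq_sup (S.filter (·.2 = x.2)) ⟨x, Finset.mem_filter.mpr ⟨hxS, rfl⟩⟩ Prod.fst
  obtain ⟨hyS, hyj⟩ := Finset.mem_filter.mp hy
  rw [topExp, hyx, ← hyj]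
  exact hyS

end TopExponent

def Level (n : ℕ) : Type := Quotient (LTerm.setoid (n := n))

namespace Level

variable {n : ℕ}

def mk : LTerm n → Level n := Quotient.mk _

theorem mk_eq_mk_iff {t u : LTerm n} : mk t = mk u ↔ LEq t u := Quotient.eq

instance : SemilatticeSup (Level n) :=
  letI : Max (Level n) := ⟨Quotient.map₂ LTerm.sup fun _ _ h _ _ h' => LEq.supCongr h h'⟩
  SemilatticeSup.mk'
    (Quotient.ind₂ fun t u => Quotient.sound (LEq.supComm t u))
    (fun a b c => Quotient.inductionOn₃ a b c fun t u v => Quotient.sound (LEq.supAssoc t u v))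
    (Quotient.ind fun t => Quotient.sound (LEq.supIdem t))

def suc : Level n → Level n := Quotient.map LTerm.suc fun _ _ h => LEq.sucCongr h

theorem mk_sup (t u : LTerm n) : mk (t.sup u) = mk t ⊔ mk u := rfl

theorem mk_suc (t : LTerm n) : mk t.suc = suc (mk t) := rfl

theorem suc_sup (a b : Level n) : suc (a ⊔ b) = suc a ⊔ suc b :=
  Quotient.inductionOn₂ a b fun t u => Quotient.sound (LEq.sucSup t u)

theorem le_suc (a : Level n) : a ≤ suc a :=
  Quotient.inductionOn a fun t => Quotient.sound (LEq.supSuc t)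

theorem suc_mono : Monotone (suc : Level n → Level n) := fun a b h =>
  calc suc a ≤ suc a ⊔ suc b := le_sup_left
    _ = suc b := by rw [← suc_sup, sup_eq_right.mpr h]

theorem mk_atom_succ (x : ℕ × Fin n) : mk (atom (Prod.map Nat.succ id x)) = suc (mk (atom x)) := by
  simp only [atom, Prod.map_fst, Prod.map_snd, id_eq, Function.iterate_succ_apply', mk_suc]

theorem mk_atom_mono (j : Fin n) : Monotone fun p => mk (atom (p, j)) := by
  have h : (fun p => mk (atom (p, j))) = fun p => suc^[p] (mk (LTerm.var j)) := by
    funext p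
    induction p with
    | zero => rfl
    | succ p ih => rw [Function.iterate_succ_apply', ← ih]; exact mk_atom_succ (p, j)
  rw [h]
  exact suc_mono.monotone_iterate_of_le_map (le_suc _)

theorem mk_eq_sup'_atoms (t : LTerm n) :
    mk t = t.atoms.sup' t.atoms_nonempty fun x => mk (atom x) := by
  induction t with
  | var j => rfl
  | sup t u iht ihu =>
    rw [mk_sup, iht, ihu]
    exact (Finset.sup'_union _ _ _).symm
  | suc t ih =>
    rw [mk_suc, ih, Finset.apply_sup'_eq_sup'_comp _ _ suc_sup]
    exact (Finset.sup'_congr _ rfl fun x _ => (mk_atom_succ x).symm).trans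
      (Finset.sup'_image (s := t.atoms) (f := Prod.map Nat.succ id) t.suc.atoms_nonempty
        fun x => mk (atom x)).symm

theorem mk_foldl_le_iff (a : LTerm n) (l : List (ℕ × Fin n)) (c : Level n) :
    mk (l.foldl (fun b pj => b.sup (atom pj)) a) ≤ c ↔
      mk a ≤ c ∧ ∀ x ∈ l, mk (atom x) ≤ c := by
  induction l generalizing a with
  | nil => simp
  | cons x l ih =>
    simp only [List.foldl_cons, ih, mk_sup, sup_le_iff, List.forall_mem_cons, and_assoc]

theorem mk_joinAtoms_le_iff (hd : ℕ × Fin n) (tl : List (ℕ × Fin n)) (c : Level n) :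
    mk (joinAtoms hd tl) ≤ c ↔ ∀ x ∈ hd :: tl, mk (atom x) ≤ c := by
  simp [joinAtoms, mk_foldl_le_iff]

theorem forall_mem_atom_le_iff (S : Finset (ℕ × Fin n)) (c : Level n) :
    (∀ x ∈ S, mk (atom x) ≤ c) ↔
      ∀ j ∈ S.image Prod.snd, mk (atom (topExp S j, j)) ≤ c := by
  refine ⟨fun h j hj => h _ (topExp_mem hj), fun h x hx => ?_⟩
  calc mk (atom x) ≤ mk (atom (topExp S x.2, x.2)) := mk_atom_mono x.2 (le_topExp hx)
    _ ≤ c := h x.2 (Finset.mem_image_of_mem _ hx)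

end Level

open Level in
theorem stmt_12 {n : ℕ} (t : LTerm n) :
    ∃ (hd : ℕ × Fin n) (tl : List (ℕ × Fin n)),
      ((hd :: tl).map Prod.snd).Nodup ∧ LEq t (joinAtoms hd tl) := by
  let L := (t.atoms.image Prod.snd).toList.map fun j => (topExp t.atoms j, j)
  obtain ⟨hd, tl, hcons⟩ : ∃ hd tl, L = hd :: tl :=
    List.exists_cons_of_ne_nil (by simpa [L] using t.atoms_nonempty.ne_empty)
  refine ⟨hd, tl, ?_, mk_eq_mk_iff.mp (eq_of_forall_ge_iff fun c => ?_)⟩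
  · simpa [← hcons, L, Function.comp_def] using Finset.nodup_toList _
  · rw [mk_joinAtoms_le_iff, ← hcons, mk_eq_sup'_atoms, Finset.sup'_le_iff,
      forall_mem_atom_le_iff]
    simp only [L, List.forall_mem_map, Finset.mem_toList]
end
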